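/- Let (M₁,‖·‖₁) ↪ (M₂,‖·‖₂) be an inclusion of normed finitely generated ℤ-modules where ‖·‖₂ restricts to ‖·‖₁, and let Q₂ = M₂/M₁ with the quotient norm ‖·‖_{2,M₂↠Q₂}. Then λ_ℚ(M₂,‖·‖₂) ≤ λ_ℚ(Q₂,‖·‖_{2,M₂↠Q₂}) + λ_ℚ(M₁,‖·‖₁) · rk(M₁). -/

import Mathlib

open scoped TensorProduct

def IsNorm {V : Type*} [AddCommGroup V] [Module ℝ V] (N : V → ℝ) : Prop :=
  (∀ v, N v = 0 ↔ v = 0) ∧ (∀ (r : ℝ) (v : V), N (r • v) = |r| * N v) ∧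
    ∀ v w, N (v + w) ≤ N v + N w

noncomputable def lambdaQ {M : Type*} [AddCommGroup M] (N : ℝ ⊗[ℤ] M → ℝ) : ℝ :=
  sInf {l | ∃ (n : ℕ) (e : Fin n → M),
    LinearIndependent ℚ (fun i => ((1 : ℚ) ⊗ₜ[ℤ] e i : ℚ ⊗[ℤ] M)) ∧
    Submodule.span ℚ (Set.range fun i => ((1 : ℚ) ⊗ₜ[ℤ] e i : ℚ ⊗[ℤ] M)) = ⊤ ∧
    ∀ i, N ((1 : ℝ) ⊗ₜ[ℤ] e i) ≤ l}

noncomputable def qNorm {X Y : Type*} [AddCommGroup X] [AddCommGroup Y]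
    [Module ℝ X] [Module ℝ Y] (N : X → ℝ) (π : X →ₗ[ℝ] Y) (t : Y) : ℝ :=
  sInf {c | ∃ v, π v = t ∧ N v = c}

/-! Take elements `a k` of `M₁` and `q j` of `Q₂` forming `ℚ`-bases, with norms close to
`λ_ℚ(M₁)` and `λ_ℚ(Q₂)`. Lift `1 ⊗ q j` to a real vector `w` of norm close to its quotient norm.
For any integral lift `m₀`, the difference `1 ⊗ m₀ - w` lies in `ℝ ⊗ M₁ = ∑ ℝ (1 ⊗ a k)`, and
subtracting the integer parts of its coordinates from `m₀` gives an integral lift of `q j` of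
norm at most `‖w‖ + ∑ ‖a k‖ ≤ ‖w‖ + rk(M₁) λ_ℚ(M₁)`. By exactness of
`0 → ℚ ⊗ M₁ → ℚ ⊗ M₂ → ℚ ⊗ Q₂ → 0`, the `a k` together with these lifts form a `ℚ`-basis
of `ℚ ⊗ M₂`. -/

open Function

section IsNorm

variable {V : Type*} [AddCommGroup V] [Module ℝ V] {N : V → ℝ}

lemma IsNorm.map_zero (hN : IsNorm N) : N 0 = 0 := (hN.1 0).2 rfl

lemma IsNorm.nonneg (hN : IsNorm N) (v : V) : 0 ≤ N v := by
  have h := hN.2.2 v (-v)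
  rw [add_neg_cancel, hN.map_zero, ← neg_one_smul ℝ v, hN.2.1, abs_neg, abs_one, one_mul] at h
  linarith

lemma IsNorm.sum_le (hN : IsNorm N) {ι : Type*} (s : Finset ι) (f : ι → V) :
    N (∑ i ∈ s, f i) ≤ ∑ i ∈ s, N (f i) :=
  Finset.le_sum_of_subadditive N hN.map_zero.le hN.2.2 s f

lemma IsNorm.smul_le (hN : IsNorm N) {c : ℝ} (hc : |c| ≤ 1) (v : V) : N (c • v) ≤ N v := by
  rw [hN.2.1]
  exact mul_le_of_le_one_left (hN.nonneg v) hc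

end IsNorm

section qNorm

variable {X Y : Type*} [AddCommGroup X] [AddCommGroup Y] [Module ℝ X] [Module ℝ Y]
  {N : X → ℝ} {π : X →ₗ[ℝ] Y}

lemma qNorm_nonneg (hN : ∀ v, 0 ≤ N v) (t : Y) : 0 ≤ qNorm N π t :=
  Real.sInf_nonneg (by rintro _ ⟨v, -, rfl⟩; exact hN v)

lemma exists_apply_eq_lt_of_qNorm_lt (hπ : Surjective π) {t : Y} {l : ℝ}
    (h : qNorm N π t < l) : ∃ v, π v = t ∧ N v < l := by
  obtain ⟨v, hv⟩ := hπ t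
  obtain ⟨_, ⟨w, hw, rfl⟩, hlt⟩ :=
    exists_lt_of_csInf_lt (s := {c | ∃ v, π v = t ∧ N v = c}) ⟨N v, v, hv, rfl⟩ h
  exact ⟨w, hw, hlt⟩

end qNorm

section Exact

variable {R A B C : Type*} [Ring R] [AddCommGroup A] [AddCommGroup B] [AddCommGroup C]
  [Module R A] [Module R B] [Module R C] {f : A →ₗ[R] B} {g : B →ₗ[R] C}
  {ι₁ ι₂ : Type*} {v : ι₁ → A} {w : ι₂ → B}

theorem LinearIndependent.sumElim_of_exact (hfg : Exact f g) (hf : Injective f)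
    (hv : LinearIndependent R v) (hw : LinearIndependent R (g ∘ w)) :
    LinearIndependent R (Sum.elim (f ∘ v) w) := by
  refine (hv.map' f (LinearMap.ker_eq_bot.mpr hf)).sum_type (.of_comp g hw) ?_
  refine Disjoint.mono_left ?_ (Submodule.range_ker_disjoint hw).symm
  rw [hfg.linearMap_ker_eq, Submodule.span_le, Set.range_comp]
  exact Set.image_subset_range _ _

theorem span_sumElim_eq_top_of_exact (hfg : Exact f g)
    (hv : Submodule.span R (Set.range v) = ⊤)
    (hw : Submodule.span R (Set.range (g ∘ w)) = ⊤) :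
    Submodule.span R (Set.range (Sum.elim (f ∘ v) w)) = ⊤ := by
  rw [eq_top_iff]
  rintro x -
  obtain ⟨y, hy, hxy⟩ : g x ∈ (Submodule.span R (Set.range w)).map g := by
    rw [Submodule.map_span, ← Set.range_comp, hw]; trivial
  have hker : x - y ∈ Submodule.span R (Set.range (f ∘ v)) := by
    rw [Set.range_comp, ← Submodule.map_span, hv, Submodule.map_top, ← hfg.linearMap_ker_eq,
      LinearMap.mem_ker, map_sub, hxy, sub_self]
  rw [Set.Sum.elim_range, Submodule.span_union, ← sub_add_cancel x y]
  exact Submodule.add_mem_sup hker hy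

end Exact

lemma exact_baseChange_subtype_mkQ {R M : Type*} [CommRing R] [AddCommGroup M] [Module R M]
    (p : Submodule R M) (A : Type*) [CommRing A] [Algebra R A] :
    Exact (p.subtype.baseChange A) (p.mkQ.baseChange A) :=
  lTensor_exact A (LinearMap.exact_subtype_mkQ p) p.mkQ_surjective

lemma span_range_one_tmul_eq_top (R A M : Type*) [CommSemiring R] [Semiring A] [Algebra R A]
    [AddCommMonoid M] [Module R M] :
    Submodule.span A (Set.range fun m : M => (1 : A) ⊗ₜ[R] m) = ⊤ := by
  rw [← Submodule.baseChange_top, Submodule.baseChange_eq_span, Submodule.map_top,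
    LinearMap.coe_range]
  rfl

def IsRationalBasis {ι M : Type*} [AddCommGroup M] (e : ι → M) : Prop :=
  LinearIndependent ℚ (fun i => (1 : ℚ) ⊗ₜ[ℤ] e i) ∧
    Submodule.span ℚ (Set.range fun i => (1 : ℚ) ⊗ₜ[ℤ] e i) = ⊤

namespace IsRationalBasis

variable {M : Type*} [AddCommGroup M] {ι κ : Type*} {e : ι → M}

lemma comp_equiv (he : IsRationalBasis e) (σ : κ ≃ ι) : IsRationalBasis (e ∘ σ) :=
  ⟨he.1.comp σ σ.injective, by
    rw [← he.2]
    exact congrArg _ (EquivLike.range_comp (fun i => (1 : ℚ) ⊗ₜ[ℤ] e i) σ)⟩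

lemma card_eq_finrank [Fintype ι] (he : IsRationalBasis e) :
    Fintype.card ι = Module.finrank ℚ (ℚ ⊗[ℤ] M) :=
  (Module.finrank_eq_card_basis (Module.Basis.mk he.1 he.2.ge)).symm

lemma span_real_eq_top (he : IsRationalBasis e) :
    Submodule.span ℝ (Set.range fun i => (1 : ℝ) ⊗ₜ[ℤ] e i) = ⊤ := by
  rw [eq_top_iff, ← span_range_one_tmul_eq_top ℤ ℝ M, Submodule.span_le]
  rintro _ ⟨m, rfl⟩
  let F := TensorProduct.AlgebraTensorModule.map (Algebra.linearMap ℚ ℝ)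
    (LinearMap.id : M →ₗ[ℤ] M)
  have hm := Submodule.mem_map_of_mem (f := F) (he.2.ge (Submodule.mem_top (x := (1 : ℚ) ⊗ₜ[ℤ] m)))
  rw [Submodule.map_span, ← Set.range_comp] at hm
  simp only [comp_def, TensorProduct.AlgebraTensorModule.map_tmul, Algebra.linearMap_apply,
    eq_ratCast, Rat.cast_one, LinearMap.id_coe, id_eq, F] at hm
  exact Submodule.span_le_restrictScalars ℚ ℝ _ hm

end IsRationalBasis

lemma exists_isRationalBasis (M : Type*) [AddCommGroup M] [Module.Finite ℤ M] :
    ∃ (n : ℕ) (e : Fin n → M), IsRationalBasis e := by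
  obtain ⟨κ, a, -, hspan, hind⟩ := exists_linearIndependent' ℚ fun m : M => (1 : ℚ) ⊗ₜ[ℤ] m
  have : Finite κ := hind.finite
  exact ⟨Nat.card κ, a ∘ (Finite.equivFin κ).symm, IsRationalBasis.comp_equiv
    ⟨hind, hspan.trans (span_range_one_tmul_eq_top ℤ ℚ M)⟩ _⟩

section lambdaQ

variable {M : Type*} [AddCommGroup M] {N : ℝ ⊗[ℤ] M → ℝ}

def lambdaQSet (N : ℝ ⊗[ℤ] M → ℝ) : Set ℝ :=
  {l | ∃ (n : ℕ) (e : Fin n → M), IsRationalBasis e ∧ ∀ i, N ((1 : ℝ) ⊗ₜ[ℤ] e i) ≤ l}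

lemma lambdaQ_eq_sInf_lambdaQSet : lambdaQ N = sInf (lambdaQSet N) := by
  simp only [lambdaQ, lambdaQSet, IsRationalBasis, and_assoc]

lemma mem_lambdaQSet_of_isRationalBasis {ι : Type*} [Fintype ι] {e : ι → M}
    (he : IsRationalBasis e) {l : ℝ} (hle : ∀ i, N ((1 : ℝ) ⊗ₜ[ℤ] e i) ≤ l) :
    l ∈ lambdaQSet N :=
  let σ := (Fintype.equivFin ι).symm
  ⟨_, e ∘ σ, he.comp_equiv σ, fun i => hle (σ i)⟩

-- `0 ≤ l` is needed when `ℚ ⊗ M = 0`: then every `l` is admissible and `sInf` is the junk `0`.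
lemma lambdaQ_le_of_isRationalBasis {ι : Type*} [Fintype ι] {e : ι → M}
    (he : IsRationalBasis e) {l : ℝ} (hl : 0 ≤ l) (hle : ∀ i, N ((1 : ℝ) ⊗ₜ[ℤ] e i) ≤ l) :
    lambdaQ N ≤ l := by
  rw [lambdaQ_eq_sInf_lambdaQSet]
  by_cases hbdd : BddBelow (lambdaQSet N)
  · exact csInf_le hbdd (mem_lambdaQSet_of_isRationalBasis he hle)
  · rwa [Real.sInf_of_not_bddBelow hbdd]

lemma exists_isRationalBasis_lt_of_lambdaQ_lt [Module.Finite ℤ M] {l : ℝ} (h : lambdaQ N < l) :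
    ∃ (n : ℕ) (e : Fin n → M), IsRationalBasis e ∧ ∀ i, N ((1 : ℝ) ⊗ₜ[ℤ] e i) < l := by
  rw [lambdaQ_eq_sInf_lambdaQSet] at h
  obtain ⟨l', ⟨n, e, he, hle⟩, hl'⟩ : ∃ l' ∈ lambdaQSet N, l' < l := by
    by_cases hbdd : BddBelow (lambdaQSet N)
    · obtain ⟨n, e, he⟩ := exists_isRationalBasis M
      obtain ⟨b, hb⟩ := Finite.exists_le fun i => N ((1 : ℝ) ⊗ₜ[ℤ] e i)
      exact exists_lt_of_csInf_lt ⟨b, mem_lambdaQSet_of_isRationalBasis he hb⟩ h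
    · exact not_bddBelow_iff.mp hbdd l
  exact ⟨n, e, he, fun i => (hle i).trans_lt hl'⟩

lemma lambdaQ_nonneg (hN : ∀ v, 0 ≤ N v) : 0 ≤ lambdaQ N := by
  rw [lambdaQ_eq_sInf_lambdaQSet]
  by_cases hM : Subsingleton (ℚ ⊗[ℤ] M)
  · have huniv : lambdaQSet N = Set.univ := Set.eq_univ_of_forall fun l =>
      ⟨0, Fin.elim0, ⟨linearIndependent_empty_type, Subsingleton.elim _ _⟩, fun i => i.elim0⟩
    rw [huniv, Real.sInf_univ]
  · refine Real.sInf_nonneg ?_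
    rintro l ⟨_ | n, e, he, hle⟩
    · have hbot : (⊥ : Submodule ℚ (ℚ ⊗[ℤ] M)) = ⊤ := by
        rw [← he.2, Set.range_eq_empty, Submodule.span_empty]
      exact absurd ((Submodule.subsingleton_iff ℚ).mp (subsingleton_iff_bot_eq_top.mp hbot)) hM
    · exact (hN _).trans (hle 0)

end lambdaQ

section Quotient

variable {M : Type*} [AddCommGroup M] {M₁ : Submodule ℤ M}
  {ι₁ ι₂ : Type*} {a : ι₁ → M₁}

lemma IsRationalBasis.sumElim {m : ι₂ → M} (ha : IsRationalBasis a)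
    (hm : IsRationalBasis (M₁.mkQ ∘ m)) : IsRationalBasis (Sum.elim (fun k => (a k : M)) m) := by
  have hfam : (fun i => (1 : ℚ) ⊗ₜ[ℤ] Sum.elim (fun k => (a k : M)) m i) =
      Sum.elim (M₁.subtype.baseChange ℚ ∘ fun k => (1 : ℚ) ⊗ₜ[ℤ] a k)
        (fun j => (1 : ℚ) ⊗ₜ[ℤ] m j) := by
    ext (k | j) <;> simp
  have hexact := exact_baseChange_subtype_mkQ M₁ ℚ
  unfold IsRationalBasis
  rw [hfam]
  exact ⟨ha.1.sumElim_of_exact hexact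
      (Module.Flat.lTensor_preserves_injective_linearMap _ M₁.injective_subtype) hm.1,
    span_sumElim_eq_top_of_exact hexact ha.2 hm.2⟩

lemma IsRationalBasis.ker_baseChange_mkQ_eq_span (ha : IsRationalBasis a) :
    LinearMap.ker (M₁.mkQ.baseChange ℝ) =
      Submodule.span ℝ (Set.range fun k => (1 : ℝ) ⊗ₜ[ℤ] (a k : M)) := by
  rw [(exact_baseChange_subtype_mkQ M₁ ℝ).linearMap_ker_eq, LinearMap.range_eq_map,
    ← ha.span_real_eq_top, Submodule.map_span, ← Set.range_comp]
  simp [comp_def]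

lemma exists_mkQ_eq_lt_add_sum [Fintype ι₁] {N : ℝ ⊗[ℤ] M → ℝ} (hN : IsNorm N)
    (ha : IsRationalBasis a) {t : M ⧸ M₁} {l : ℝ}
    (ht : qNorm N (M₁.mkQ.baseChange ℝ) ((1 : ℝ) ⊗ₜ[ℤ] t) < l) :
    ∃ m : M, M₁.mkQ m = t ∧ N ((1 : ℝ) ⊗ₜ[ℤ] m) < l + ∑ k, N ((1 : ℝ) ⊗ₜ[ℤ] (a k : M)) := by
  obtain ⟨m₀, rfl⟩ := M₁.mkQ_surjective t
  obtain ⟨w, hw, hwN⟩ :=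
    exists_apply_eq_lt_of_qNorm_lt (π := M₁.mkQ.baseChange ℝ)
      (LinearMap.lTensor_surjective ℝ M₁.mkQ_surjective) ht
  have hker : (1 : ℝ) ⊗ₜ[ℤ] m₀ - w ∈
      Submodule.span ℝ (Set.range fun k => (1 : ℝ) ⊗ₜ[ℤ] (a k : M)) := by
    rw [← ha.ker_baseChange_mkQ_eq_span, LinearMap.mem_ker, map_sub, hw,
      LinearMap.baseChange_tmul, sub_self]
  obtain ⟨c, hc⟩ := (Submodule.mem_span_range_iff_exists_fun ℝ).mp hker
  refine ⟨m₀ - ∑ k, ⌊c k⌋ • (a k : M),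
    by simpa using M₁.sum_mem fun k _ => M₁.smul_mem ⌊c k⌋ (a k).2, ?_⟩
  have hfract : (1 : ℝ) ⊗ₜ[ℤ] (m₀ - ∑ k, ⌊c k⌋ • (a k : M)) =
      w + ∑ k, Int.fract (c k) • (1 : ℝ) ⊗ₜ[ℤ] (a k : M) := by
    simp only [TensorProduct.tmul_sub, TensorProduct.tmul_sum, TensorProduct.tmul_smul,
      ← Int.cast_smul_eq_zsmul ℝ, Int.fract, sub_smul, Finset.sum_sub_distrib, hc]
    abel
  calc N ((1 : ℝ) ⊗ₜ[ℤ] (m₀ - ∑ k, ⌊c k⌋ • (a k : M)))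
      ≤ N w + ∑ k, N (Int.fract (c k) • (1 : ℝ) ⊗ₜ[ℤ] (a k : M)) := by
        rw [hfract]
        grw [hN.2.2, hN.sum_le]
    _ < l + ∑ k, N ((1 : ℝ) ⊗ₜ[ℤ] (a k : M)) := by
        refine add_lt_add_of_lt_of_le hwN (Finset.sum_le_sum fun k _ => hN.smul_le ?_ _)
        rw [abs_of_nonneg (Int.fract_nonneg _)]
        exact (Int.fract_lt_one _).le

end Quotient

/-- For an inclusion `M₁ ⊆ M₂` of normed finitely generated `ℤ`-modules
(the norm of `M₁` being the restriction of that of `M₂`) and `Q₂ = M₂/M₁` with the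
quotient norm, one has `λ_ℚ(M₂) ≤ λ_ℚ(Q₂) + λ_ℚ(M₁)·rk(M₁)`. -/
theorem lambdaQ_le_lambdaQ_quotient_add
    {M₂ : Type*} [AddCommGroup M₂] [Module.Finite ℤ M₂]
    (M₁ : Submodule ℤ M₂)
    (N₂ : ℝ ⊗[ℤ] M₂ → ℝ) (hN₂ : IsNorm N₂) :
    lambdaQ N₂ ≤
      lambdaQ (qNorm N₂ (LinearMap.baseChange ℝ M₁.mkQ))
        + lambdaQ (fun v : ℝ ⊗[ℤ] ↥M₁ => N₂ (LinearMap.baseChange ℝ M₁.subtype v))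
            * (Module.finrank ℚ (ℚ ⊗[ℤ] ↥M₁) : ℝ) := by
  set lQ := lambdaQ (qNorm N₂ (LinearMap.baseChange ℝ M₁.mkQ))
  set l₁ := lambdaQ (fun v : ℝ ⊗[ℤ] ↥M₁ => N₂ (LinearMap.baseChange ℝ M₁.subtype v))
  set r : ℝ := (Module.finrank ℚ (ℚ ⊗[ℤ] ↥M₁) : ℝ)
  refine le_of_forall_pos_le_add fun ε hε => ?_
  have hr : 0 < r + 1 := by positivity
  set δ := ε / (r + 1)
  have hδ : 0 < δ := by positivity
  have hlQδ : 0 ≤ lQ + δ := add_nonneg (lambdaQ_nonneg (qNorm_nonneg hN₂.nonneg)) hδ.le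
  obtain ⟨n₂, q, hq, hqN⟩ := exists_isRationalBasis_lt_of_lambdaQ_lt (lt_add_of_pos_right lQ hδ)
  obtain ⟨n₁, a, ha, haN⟩ := exists_isRationalBasis_lt_of_lambdaQ_lt (lt_add_of_pos_right l₁ hδ)
  choose m hmq hmN using fun j => exists_mkQ_eq_lt_add_sum hN₂ ha (hqN j)
  have hm : IsRationalBasis (M₁.mkQ ∘ m) := by simpa [comp_def, hmq] using hq
  set S := ∑ k, N₂ ((1 : ℝ) ⊗ₜ[ℤ] (a k : M₂))
  have hS : S ≤ r * (l₁ + δ) := by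
    have hn₁ : (n₁ : ℝ) = r := by rw [← Fintype.card_fin n₁, ha.card_eq_finrank]
    calc S ≤ ∑ _k : Fin n₁, (l₁ + δ) := Finset.sum_le_sum fun k _ => by simpa using (haN k).le
      _ = r * (l₁ + δ) := by
        rw [Finset.sum_const, Finset.card_univ, Fintype.card_fin, nsmul_eq_mul, hn₁]
  calc lambdaQ N₂ ≤ lQ + δ + S := by
        refine lambdaQ_le_of_isRationalBasis (ha.sumElim hm)
          (add_nonneg hlQδ (Finset.sum_nonneg fun k _ => hN₂.nonneg _)) ?_
        rintro (k | j)
        · have hk : N₂ ((1 : ℝ) ⊗ₜ[ℤ] (a k : M₂)) ≤ S :=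
            Finset.single_le_sum (f := fun k => N₂ ((1 : ℝ) ⊗ₜ[ℤ] (a k : M₂)))
              (fun k _ => hN₂.nonneg _) (Finset.mem_univ k)
          exact hk.trans (le_add_of_nonneg_left hlQδ)
        · exact (hmN j).le
    _ ≤ lQ + δ + r * (l₁ + δ) := by gcongr
    _ = lQ + l₁ * r + ε := by linear_combination div_mul_cancel₀ ε hr.ne'
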